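/- Every semigroup which is a disjoint union of finitely many copies of the free monogenic semigroup is finitely presented. -/

import Mathlib

/-!
The morphism `lift gen` from the free semigroup on the generators onto `S` has the words `c ^ i`
as a transversal of its kernel, so it suffices to find finitely many relations of `S` rewriting every
word into such a normal word; by induction on length, only the words `a b ^ n` need rewriting, for
each of the finitely many pairs `(a, b)`. If `a b ^ n` takes some value twice, say
`a b ^ m = a b ^ n` with `m < n`, this one relation reduces `a b ^ (k + n - m)` to `a b ^ k`.
Otherwise every value is taken once, so for large `n` the element `a b ^ n` lies, with a large
exponent, in a block `⟨c⟩` that the sequence visits infinitely often. Two visits give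
`c ^ f b ^ q = c ^ (f + d)`; a common multiple `Q` of these `q` turns them into relations
`c ^ F b ^ Q = c ^ (F + D c)`, which rewrite the normal form of `a b ^ n` into that of
`a b ^ (n + Q)`.
-/

/-- `spow a n` is the `n`-th power of `a` in a semigroup, for `n ≥ 1`
(with the junk value `a` at `n = 0`). -/
def spow {S : Type*} [Semigroup S] (a : S) : ℕ → S
  | 0 => a
  | 1 => a
  | (n + 2) => spow a (n + 1) * a

/-- The subsemigroup (as a set) generated by `a`: all positive powers of `a`. -/
def Nblock {S : Type*} [Semigroup S] (a : S) : Set S :=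
  {x | ∃ i : ℕ, 1 ≤ i ∧ x = spow a i}

/-- A semigroup is finitely presented if it is isomorphic to the quotient of a free
semigroup on a finite alphabet by the congruence generated by a finite set of pairs. -/
def FinitelyPresentedSemigroup (S : Type*) [Semigroup S] : Prop :=
  ∃ (X : Type) (_ : Finite X) (R : Set (FreeSemigroup X × FreeSemigroup X)),
    R.Finite ∧ Nonempty ((conGen fun u v => (u, v) ∈ R).Quotient ≃* S)

open Filter

section Spow

variable {S T : Type*} [Semigroup S] [Semigroup T]

theorem spow_succ (a : S) {n : ℕ} (hn : 1 ≤ n) : spow a (n + 1) = spow a n * a := by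
  obtain ⟨k, rfl⟩ := Nat.exists_eq_add_of_le' hn
  rfl

theorem spow_add (a : S) {m n : ℕ} (hm : 1 ≤ m) (hn : 1 ≤ n) :
    spow a (m + n) = spow a m * spow a n := by
  induction n, hn using Nat.le_induction with
  | base => exact spow_succ a hm
  | succ n hn ih => rw [← add_assoc, spow_succ a (by omega), ih, spow_succ a hn, mul_assoc]

theorem map_spow (f : S →ₙ* T) (a : S) (n : ℕ) : f (spow a n) = spow (f a) n := by
  induction n with
  | zero => rfl
  | succ n ih =>
    rcases Nat.eq_zero_or_pos n with rfl | hn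
    · rfl
    · rw [spow_succ a hn, map_mul, ih, spow_succ (f a) hn]

theorem mul_spow_add (x a : S) {m n : ℕ} (hm : 1 ≤ m) (hn : 1 ≤ n) :
    x * spow a (m + n) = x * spow a m * spow a n := by
  rw [spow_add a hm hn, mul_assoc]

theorem spow_mul_spow_of_le {x y : S} {f q d f' : ℕ} (hf : 1 ≤ f)
    (h : spow x f * spow y q = spow x (f + d)) (hf' : f ≤ f') :
    spow x f' * spow y q = spow x (f' + d) := by
  rcases hf'.eq_or_lt with rfl | hlt
  · exact h
  obtain ⟨j, hj, rfl⟩ : ∃ j, 1 ≤ j ∧ f' = j + f := ⟨f' - f, by omega, by omega⟩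
  rw [spow_add x hj hf, mul_assoc, h, ← spow_add x hj (by omega), add_assoc]

theorem spow_mul_spow_mul_of_le {x y : S} {f q d f' t : ℕ} (hf : 1 ≤ f) (hq : 1 ≤ q)
    (h : spow x f * spow y q = spow x (f + d)) (hf' : f ≤ f') (ht : 1 ≤ t) :
    spow x f' * spow y (q * t) = spow x (f' + d * t) := by
  induction t, ht using Nat.le_induction generalizing f' with
  | base => simpa using spow_mul_spow_of_le hf h hf'
  | succ t ht ih =>
    rw [Nat.mul_succ, spow_add y (Nat.mul_pos hq ht) hq, ← mul_assoc, ih hf',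
      spow_mul_spow_of_le hf h (by omega), Nat.mul_succ, add_assoc]

end Spow

namespace Con

variable {M N : Type*} [Mul M] [Mul N]

theorem rel_iff_of_forall_exists_rel {c : Con M} {f : M →ₙ* N} {T : Set M}
    (hle : ∀ x y, c x y → f x = f y) (hinj : Set.InjOn f T) (hred : ∀ x, ∃ t ∈ T, c x t)
    (x y : M) : c x y ↔ f x = f y := by
  refine ⟨hle x y, fun hxy => ?_⟩
  obtain ⟨s, hs, hxs⟩ := hred x
  obtain ⟨t, ht, hyt⟩ := hred y
  have hst : s = t := hinj hs ht <| by rw [← hle _ _ hxs, ← hle _ _ hyt, hxy]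
  exact c.trans hxs (hst ▸ c.symm hyt)

theorem nonempty_quotient_mulEquiv {c : Con M} {f : M →ₙ* N} (hf : Function.Surjective f)
    (hc : ∀ x y, c x y ↔ f x = f y) : Nonempty (c.Quotient ≃* N) := by
  let g : c.Quotient →ₙ* N :=
    { toFun := fun q => q.liftOn f fun x y => (hc x y).1
      map_mul' := fun p q => Con.induction_on₂ p q fun x y => map_mul f x y }
  refine ⟨MulEquiv.ofBijective g ⟨fun p q => ?_, fun y => ?_⟩⟩
  · exact Con.induction_on₂ p q fun x y hxy => c.eq.2 ((hc x y).2 hxy)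
  · obtain ⟨x, rfl⟩ := hf y
    exact ⟨x, rfl⟩

end Con

section Sequences

variable {S : Type*} [Semigroup S]

theorem exists_spow_mul_spow_eq_of_frequently {x y c : S}
    (hinj : ∀ v, ∀ᶠ n in atTop, x * spow y n ≠ v)
    (hfreq : ∃ᶠ n in atTop, x * spow y n ∈ Nblock c) :
    ∃ f q d, 1 ≤ f ∧ 1 ≤ q ∧ spow c f * spow y q = spow c (f + d) := by
  obtain ⟨m, ⟨f, hf, hm⟩, hm1⟩ := (hfreq.and_eventually (eventually_ge_atTop 1)).exists
  have hlater : ∀ᶠ n in atTop, m < n ∧ ∀ i ∈ Set.Iic f, x * spow y n ≠ spow c i :=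
    (eventually_gt_atTop m).and ((Set.finite_Iic f).eventually_all.2 fun i _ => hinj _)
  obtain ⟨n, ⟨j, hj, hn⟩, hmn, hne⟩ := (hfreq.and_eventually hlater).exists
  have hfj : f < j := not_le.1 fun hjf => hne j hjf hn
  refine ⟨f, n - m, j - f, hf, by omega, ?_⟩
  rw [← hm, ← mul_spow_add x y hm1 (by omega), Nat.add_sub_cancel' hmn.le, hn,
    Nat.add_sub_cancel' hfj.le]

theorem eventually_lt_and_frequently_mem_Nblock {X : Type*} [Finite X] (gen : X → S) {x y : S}
    (hinj : ∀ v, ∀ᶠ n in atTop, x * spow y n ≠ v) (F : ℕ) :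
    ∀ᶠ n in atTop, ∀ c e, x * spow y n = spow (gen c) e →
      F < e ∧ ∃ᶠ m in atTop, x * spow y m ∈ Nblock (gen c) := by
  have hblocks : ∀ᶠ n in atTop, ∀ c, (∃ᶠ m in atTop, x * spow y m ∈ Nblock (gen c)) ∨
      x * spow y n ∉ Nblock (gen c) :=
    eventually_all.2 fun c => (em (∃ᶠ m in atTop, x * spow y m ∈ Nblock (gen c))).elim
      (fun hc => .of_forall fun _ => Or.inl hc) fun hc => (not_frequently.1 hc).mono fun _ => Or.inr
  have hlarge : ∀ᶠ n in atTop, ∀ c, ∀ i ∈ Set.Iic F, x * spow y n ≠ spow (gen c) i :=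
    eventually_all.2 fun c => (Set.finite_Iic F).eventually_all.2 fun i _ => hinj _
  filter_upwards [hblocks, hlarge] with n hnc hnF c e hn
  have hFe : F < e := not_le.1 fun heF => hnF c e heF hn
  exact ⟨hFe, (hnc c).resolve_right fun h => h ⟨e, by omega, hn⟩⟩

theorem exists_eventually_spow_mul_spow_eq {X : Type*} [Finite X] (gen : X → S) {x y : S}
    (hinj : ∀ v, ∀ᶠ n in atTop, x * spow y n ≠ v) :
    ∃ F Q : ℕ, ∃ D : X → ℕ, 1 ≤ F ∧ 1 ≤ Q ∧
      ∀ᶠ n in atTop, ∀ c e, x * spow y n = spow (gen c) e →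
        F < e ∧ spow (gen c) F * spow y Q = spow (gen c) (F + D c) := by
  have := Fintype.ofFinite X
  have hrel : ∀ c, ∃ f q d, 1 ≤ f ∧ 1 ≤ q ∧
      ((∃ᶠ n in atTop, x * spow y n ∈ Nblock (gen c)) →
        spow (gen c) f * spow y q = spow (gen c) (f + d)) := by
    intro c
    by_cases hc : ∃ᶠ n in atTop, x * spow y n ∈ Nblock (gen c)
    · obtain ⟨f, q, d, hf, hq, h⟩ := exists_spow_mul_spow_eq_of_frequently hinj hc
      exact ⟨f, q, d, hf, hq, fun _ => h⟩
    · exact ⟨1, 1, 0, le_rfl, le_rfl, fun h => absurd h hc⟩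
  choose f q d hf hq hfqd using hrel
  obtain ⟨F, hF, hfF⟩ : ∃ F, 1 ≤ F ∧ ∀ c, f c ≤ F :=
    ((eventually_ge_atTop 1).and (eventually_all.2 fun c => eventually_ge_atTop (f c))).exists
  have hQ : 0 < ∏ c, q c := Finset.prod_pos fun c _ => hq c
  refine ⟨F, ∏ c, q c, fun c => d c * ((∏ c, q c) / q c), hF, hQ, ?_⟩
  filter_upwards [eventually_lt_and_frequently_mem_Nblock gen hinj F] with n hn c e hce
  obtain ⟨hFe, hc⟩ := hn c e hce
  obtain ⟨t, ht⟩ : q c ∣ ∏ c, q c := Finset.dvd_prod_of_mem q (Finset.mem_univ c)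
  have ht1 : 1 ≤ t := Nat.pos_of_ne_zero fun h => by simp [h] at ht; omega
  refine ⟨hFe, ?_⟩
  rw [ht, Nat.mul_div_cancel_left t (hq c)]
  exact spow_mul_spow_mul_of_le (hf c) (hq c) (hfqd c hc) (hfF c) ht1

end Sequences

namespace FreeSemigroup

variable {S : Type*} [Semigroup S] {X : Type*} {gen : X → S}

def normalWords (X : Type*) : Set (FreeSemigroup X) := ⋃ c, Nblock (of c)

theorem mem_normalWords {w : FreeSemigroup X} :
    w ∈ normalWords X ↔ ∃ c i, 1 ≤ i ∧ w = spow (of c) i := by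
  simp [normalWords, Nblock]

theorem lift_injOn_normalWords
    (hfree : ∀ (a b : X) (i j : ℕ), 1 ≤ i → 1 ≤ j →
      spow (gen a) i = spow (gen b) j → a = b ∧ i = j) :
    Set.InjOn (lift gen) (normalWords X) := by
  intro _ hv _ hw hvw
  obtain ⟨a, i, hi, rfl⟩ := mem_normalWords.1 hv
  obtain ⟨b, j, hj, rfl⟩ := mem_normalWords.1 hw
  rw [map_spow, map_spow, lift_of, lift_of] at hvw
  obtain ⟨rfl, rfl⟩ := hfree a b i j hi hj hvw
  rfl

theorem exists_mem_normalWords_lift_eq (hcover : ∀ x : S, ∃ a : X, x ∈ Nblock (gen a))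
    (x : S) : ∃ w ∈ normalWords X, lift gen w = x := by
  obtain ⟨a, i, hi, rfl⟩ := hcover x
  exact ⟨spow (of a) i, mem_normalWords.2 ⟨a, i, hi, rfl⟩, by rw [map_spow, lift_of]⟩

theorem lift_eq_of_conGen {R : Set (FreeSemigroup X × FreeSemigroup X)}
    (hR : ∀ p ∈ R, lift gen p.1 = lift gen p.2) {v w : FreeSemigroup X}
    (h : conGen (fun x y => (x, y) ∈ R) v w) : lift gen v = lift gen w :=
  (Con.conGen_le (c := Con.ker (lift gen))).2 (fun x y hxy => hR (x, y) hxy) h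

theorem lift_mul_spow (u v : FreeSemigroup X) (n : ℕ) :
    lift gen (u * spow v n) = lift gen u * spow (lift gen v) n := by
  rw [map_mul, map_spow]

variable (gen) in
def FinitelyReducible (W : Set (FreeSemigroup X)) : Prop :=
  ∃ R : Set (FreeSemigroup X × FreeSemigroup X), R.Finite ∧
    (∀ p ∈ R, lift gen p.1 = lift gen p.2) ∧
    ∀ w ∈ W, ∃ w' ∈ normalWords X, conGen (fun x y => (x, y) ∈ R) w w'

theorem FinitelyReducible.iUnion {ι : Type*} [Finite ι] {W : ι → Set (FreeSemigroup X)}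
    (h : ∀ i, FinitelyReducible gen (W i)) : FinitelyReducible gen (⋃ i, W i) := by
  choose R hR hRlift hRred using h
  refine ⟨⋃ i, R i, Set.finite_iUnion hR, fun p hp => ?_, fun w hw => ?_⟩
  · obtain ⟨i, hp⟩ := Set.mem_iUnion.1 hp
    exact hRlift i p hp
  obtain ⟨i, hw⟩ := Set.mem_iUnion.1 hw
  obtain ⟨w', hw', hww'⟩ := hRred i w hw
  exact ⟨w', hw', Con.conGen_mono (fun x y h => Set.mem_iUnion.2 ⟨i, h⟩) hww'⟩

-- The step is asked of every congruence containing `T`, so that it applies to the one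
-- generated by `T` together with the relations settling the first `P + Q` words.
theorem finitelyReducible_mul_spow_of_step (hcover : ∀ x : S, ∃ a : X, x ∈ Nblock (gen a))
    (u v : FreeSemigroup X) {P Q : ℕ} (hP : 1 ≤ P) (hQ : 1 ≤ Q)
    {T : Set (FreeSemigroup X × FreeSemigroup X)} (hT : T.Finite)
    (hTlift : ∀ p ∈ T, lift gen p.1 = lift gen p.2)
    (hstep : ∀ r : Con (FreeSemigroup X), (∀ p ∈ T, r p.1 p.2) → ∀ k ≥ P,
      ∀ w ∈ normalWords X, lift gen w = lift gen (u * spow v k) →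
      r (u * spow v k) w → ∃ w' ∈ normalWords X, r (u * spow v (k + Q)) w') :
    FinitelyReducible gen ((u * spow v ·) '' Set.Ici 1) := by
  choose nf hnf hnf_lift using exists_mem_normalWords_lift_eq hcover
  let R := T ∪ (fun n => (u * spow v n, nf (lift gen (u * spow v n)))) '' Set.Iio (P + Q)
  let r := conGen fun x y => (x, y) ∈ R
  have hRlift : ∀ p ∈ R, lift gen p.1 = lift gen p.2 := by
    rintro p (hp | ⟨n, -, rfl⟩)
    exacts [hTlift p hp, (hnf_lift _).symm]
  refine ⟨R, hT.union ((Set.finite_Iio _).image _), hRlift, ?_⟩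
  rintro _ ⟨n, hn, rfl⟩
  induction n using Nat.strong_induction_on with
  | _ n ih =>
    by_cases hsmall : n < P + Q
    · exact ⟨_, hnf _, ConGen.Rel.of _ _ (Or.inr ⟨n, hsmall, rfl⟩)⟩
    obtain ⟨w, hw, hrw⟩ := ih (n - Q) (by omega) (Set.mem_Ici.2 (by omega))
    have := hstep r (fun p hp => ConGen.Rel.of _ _ (Or.inl hp)) (n - Q) (by omega) w hw
      (lift_eq_of_conGen hRlift hrw).symm hrw
    rwa [Nat.sub_add_cancel (by omega)] at this

theorem finitelyReducible_mul_spow_of_eq (hcover : ∀ x : S, ∃ a : X, x ∈ Nblock (gen a))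
    (u v : FreeSemigroup X) {m n : ℕ} (hm : 1 ≤ m) (hmn : m < n)
    (h : lift gen (u * spow v m) = lift gen (u * spow v n)) :
    FinitelyReducible gen ((u * spow v ·) '' Set.Ici 1) := by
  refine finitelyReducible_mul_spow_of_step hcover u v (P := m + 1) (Q := n - m) (by omega)
    (by omega) (Set.finite_singleton (u * spow v n, u * spow v m)) (by simpa using h.symm) ?_
  intro r hr k hk w hw _ hkw
  refine ⟨w, hw, r.trans ?_ hkw⟩
  rw [show k + (n - m) = n + (k - m) by omega, mul_spow_add u v (by omega) (by omega),
    show k = m + (k - m) by omega, mul_spow_add u v hm (by omega), Nat.add_sub_cancel_left]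
  exact r.mul (hr _ rfl) (r.refl _)

theorem finitelyReducible_mul_spow_of_tendsto [Finite X]
    (hcover : ∀ x : S, ∃ a : X, x ∈ Nblock (gen a)) (u v : FreeSemigroup X)
    (hinj : ∀ x, ∀ᶠ n in atTop, lift gen (u * spow v n) ≠ x) :
    FinitelyReducible gen ((u * spow v ·) '' Set.Ici 1) := by
  simp only [lift_mul_spow] at hinj
  obtain ⟨F, Q, D, hF, hQ, hev⟩ := exists_eventually_spow_mul_spow_eq gen hinj
  obtain ⟨P, hP⟩ := eventually_atTop.1 hev
  let T := Set.range (fun c => (spow (of c) F * spow v Q, spow (of c) (F + D c))) ∩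
    {p | lift gen p.1 = lift gen p.2}
  refine finitelyReducible_mul_spow_of_step hcover u v (P := P + 1) (T := T) (by omega) hQ
    ((Set.finite_range _).inter_of_left _) (fun p hp => hp.2) ?_
  intro r hr k hk w hw hwk hkw
  obtain ⟨c, e, he, rfl⟩ := mem_normalWords.1 hw
  rw [map_spow, lift_of, lift_mul_spow] at hwk
  obtain ⟨hFe, hrel⟩ := hP k (by omega) c e hwk.symm
  have hT : r (spow (of c) F * spow v Q) (spow (of c) (F + D c)) :=
    hr _ ⟨⟨c, rfl⟩, by
      simpa only [Set.mem_ofPred_eq, map_mul, map_spow, lift_of] using hrel⟩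
  refine ⟨spow (of c) (e + D c), mem_normalWords.2 ⟨c, _, by omega, rfl⟩, ?_⟩
  have hsplit : spow (of c) e = spow (of c) (e - F) * spow (of c) F := by
    rw [← spow_add _ (by omega) hF, Nat.sub_add_cancel hFe.le]
  have hmerge : spow (of c) (e - F) * spow (of c) (F + D c) = spow (of c) (e + D c) := by
    rw [← spow_add _ (by omega) (by omega)]
    congr 1
    omega
  rw [mul_spow_add u v (by omega) hQ, ← hmerge]
  refine r.trans (r.mul hkw (r.refl _)) ?_
  rw [hsplit, mul_assoc]
  exact r.mul (r.refl _) hT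

theorem finitelyReducible_mul_spow [Finite X]
    (hcover : ∀ x : S, ∃ a : X, x ∈ Nblock (gen a)) (u v : FreeSemigroup X) :
    FinitelyReducible gen ((u * spow v ·) '' Set.Ici 1) := by
  by_cases hinj : ∀ x, ∀ᶠ n in atTop, lift gen (u * spow v n) ≠ x
  · exact finitelyReducible_mul_spow_of_tendsto hcover u v hinj
  push Not at hinj
  obtain ⟨x, hx⟩ := hinj
  obtain ⟨m, hmx, hm⟩ := (hx.and_eventually (eventually_ge_atTop 1)).exists
  obtain ⟨n, hnx, hmn⟩ := (hx.and_eventually (eventually_gt_atTop m)).exists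
  exact finitelyReducible_mul_spow_of_eq hcover u v hm hmn (hmx.trans hnx.symm)

theorem finitelyReducible_univ [Finite X] (hcover : ∀ x : S, ∃ a : X, x ∈ Nblock (gen a)) :
    FinitelyReducible gen Set.univ := by
  obtain ⟨R, hR, hRlift, hred⟩ := FinitelyReducible.iUnion fun p : X × X =>
    finitelyReducible_mul_spow hcover (of p.1) (of p.2)
  let r := conGen fun x y => (x, y) ∈ R
  refine ⟨R, hR, hRlift, ?_⟩
  rintro w -
  induction w using FreeSemigroup.recOnMul with
  | ih1 a => exact ⟨of a, mem_normalWords.2 ⟨a, 1, le_rfl, rfl⟩, r.refl _⟩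
  | ih2 a w _ ih =>
    obtain ⟨_, hw, hww⟩ := ih
    obtain ⟨b, j, hj, rfl⟩ := mem_normalWords.1 hw
    obtain ⟨w', hw', hred⟩ := hred _ (Set.mem_iUnion.2 ⟨(a, b), j, hj, rfl⟩)
    exact ⟨w', hw', r.trans (r.mul (r.refl _) hww) hred⟩

end FreeSemigroup

theorem finitelyPresentedSemigroup_of_cover {S : Type*} [Semigroup S] {X : Type} [Finite X]
    (gen : X → S) (hcover : ∀ x : S, ∃ a : X, x ∈ Nblock (gen a))
    (hfree : ∀ (a b : X) (i j : ℕ), 1 ≤ i → 1 ≤ j →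
      spow (gen a) i = spow (gen b) j → a = b ∧ i = j) :
    FinitelyPresentedSemigroup S := by
  obtain ⟨R, hR, hRlift, hred⟩ := FreeSemigroup.finitelyReducible_univ hcover
  have hsurj : Function.Surjective (FreeSemigroup.lift gen) := fun x =>
    (FreeSemigroup.exists_mem_normalWords_lift_eq hcover x).imp fun _ h => h.2
  exact ⟨X, inferInstance, R, hR, Con.nonempty_quotient_mulEquiv hsurj <|
    Con.rel_iff_of_forall_exists_rel (fun _ _ => FreeSemigroup.lift_eq_of_conGen hRlift)
      (FreeSemigroup.lift_injOn_normalWords hfree) fun w => hred w trivial⟩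

theorem stmt10 {S : Type*} [Semigroup S] {A : Type*} [Finite A] (gen : A → S)
    (hcover : ∀ x : S, ∃ a : A, x ∈ Nblock (gen a))
    (hfree : ∀ (a b : A) (i j : ℕ), 1 ≤ i → 1 ≤ j →
      spow (gen a) i = spow (gen b) j → a = b ∧ i = j) :
    FinitelyPresentedSemigroup S := by
  let e := Finite.equivFin A
  refine finitelyPresentedSemigroup_of_cover (gen ∘ e.symm) (fun x => ?_)
    (fun a b i j hi hj h => ?_)
  · obtain ⟨a, ha⟩ := hcover x
    exact ⟨e a, by simpa using ha⟩
  · obtain ⟨hab, rfl⟩ := hfree _ _ i j hi hj h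
    exact ⟨e.symm.injective hab, rfl⟩
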